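/- arXiv:2503.15399 — 5 statements merged into one kernel-verified Lean document; each statement's English description precedes it below -/
import Mathlib

section
/- The minimum over (p_a, p_b, p_c) with p_a + p_b + p_c = 1, 0 ≤ p_a, p_b, p_c ≤ 1, and p_b ≤ 2 - 3/e of the ratio ((2/3)κ*_m p_a + κ*_B p_b + κ*_S p_c) / ((2/3)p_a + p_b + p_c) equals κ* = (2e⁴ - 8e² + 21e - 27)/(2e⁴), attained at p_a = 0, p_b = 2 - 3/e, p_c = 3/e - 1. -/
open Real

theorem stmt_8 :
    let e : ℝ := Real.exp 1
    let κm : ℝ := 1 + (27/4) * Real.exp (-4) - 12 * Real.exp (-3) + 2 * Real.exp (-2)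
    let κB : ℝ := 1 - 2 * Real.exp (-2)
    let κS : ℝ := 1 - (9/2) * Real.exp (-3)
    let κ : ℝ := (2 * e ^ 4 - 8 * e ^ 2 + 21 * e - 27) / (2 * e ^ 4)
    let f : ℝ → ℝ → ℝ → ℝ := fun pa pb pc =>
      ((2/3) * κm * pa + κB * pb + κS * pc) / ((2/3) * pa + pb + pc)
    IsLeast {r : ℝ | ∃ pa pb pc : ℝ, pa + pb + pc = 1 ∧
        0 ≤ pa ∧ pa ≤ 1 ∧ 0 ≤ pb ∧ pb ≤ 1 ∧ 0 ≤ pc ∧ pc ≤ 1 ∧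
        pb ≤ 2 - 3 / e ∧ r = f pa pb pc} κ ∧
    f 0 (2 - 3 / e) (3 / e - 1) = κ := by
  intro e κm κB κS κ f
  have hE : (0:ℝ) < e := Real.exp_pos 1
  have hE0 : e ≠ 0 := ne_of_gt hE
  have h1 : (2.7:ℝ) < e := lt_trans (by norm_num) Real.exp_one_gt_d9
  have h2 : e < 2.72 := lt_trans Real.exp_one_lt_d9 (by norm_num)
  have e2 : Real.exp (-2) = (e ^ 2)⁻¹ := by
    rw [Real.exp_neg]
    congr 1
    rw [show (2:ℝ) = ((2:ℕ):ℝ) * 1 by norm_num, Real.exp_nat_mul]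
  have e3 : Real.exp (-3) = (e ^ 3)⁻¹ := by
    rw [Real.exp_neg]
    congr 1
    rw [show (3:ℝ) = ((3:ℕ):ℝ) * 1 by norm_num, Real.exp_nat_mul]
  have e4 : Real.exp (-4) = (e ^ 4)⁻¹ := by
    rw [Real.exp_neg]
    congr 1
    rw [show (4:ℝ) = ((4:ℕ):ℝ) * 1 by norm_num, Real.exp_nat_mul]
  -- coefficient κS - κB, as explicit rational expression
  have hcoef : (0:ℝ) ≤ 2 * (e ^ 2)⁻¹ - (9/2) * (e ^ 3)⁻¹ := by
    have hrw : 2 * (e ^ 2)⁻¹ - (9/2) * (e ^ 3)⁻¹ = (2 * e - 9/2) / e ^ 3 := by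
      field_simp
    rw [hrw]
    apply div_nonneg (by linarith) (by positivity)
  -- key algebraic identity
  have key : ∀ pa pb pc : ℝ, pa + pb + pc = 1 →
      (2/3) * κm * pa + κB * pb + κS * pc - κ * ((2/3) * pa + pb + pc)
        = (2 * (e ^ 2)⁻¹ - (9/2) * (e ^ 3)⁻¹) * ((2 - 3 / e) - pb) := by
    intro pa pb pc hsum
    have hpc : pc = 1 - pa - pb := by linarith
    subst hpc
    simp only [κm, κB, κS, κ, e2, e3, e4]
    field_simp
    ring
  -- bounds on the optimal point coordinates
  have h3e : 3 / e ≤ 2 := by rw [div_le_iff₀ hE]; linarith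
  have h3e' : 1 ≤ 3 / e := by rw [le_div_iff₀ hE]; linarith
  -- the value at the optimal point
  have hden : (2:ℝ)/3 * 0 + (2 - 3 / e) + (3 / e - 1) = 1 := by ring
  have hval : f 0 (2 - 3 / e) (3 / e - 1) = κ := by
    simp only [f]
    rw [hden, div_one]
    simp only [κm, κB, κS, κ, e2, e3, e4]
    field_simp
    ring
  refine ⟨⟨⟨0, 2 - 3 / e, 3 / e - 1, by ring, le_refl 0, by norm_num, by linarith,
      by linarith, by linarith, by linarith, le_refl _, hval.symm⟩, ?_⟩, hval⟩
  rintro r ⟨pa, pb, pc, hsum, ha0, ha1, hb0, hb1, hc0, hc1, hpb, rfl⟩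
  have hD : 0 < (2:ℝ)/3 * pa + pb + pc := by linarith
  simp only [f]
  rw [le_div_iff₀ hD]
  have h := mul_nonneg hcoef (by linarith : (0:ℝ) ≤ (2 - 3 / e) - pb)
  have hk := key pa pb pc hsum
  linarith
end

section
/- The unique solution of α'(t) + α(t) = e^{-2t}(1 + tz), α(0) = 1, is α(t) = e^{-2t}(2e^t - 1 + z(e^t - t - 1)), and 3·(1 - e^{-2}(2e - 1 + z(e-2))) ≥ (2e⁴ - 8e² + 21e - 27)/(2e⁴) whenever 0 ≤ z ≤ 1. -/
open Real

theorem stmt_14 (z : ℝ) (hz : z ∈ Set.Icc (0:ℝ) 1) (α : ℝ → ℝ)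
    (hα : ∀ t, HasDerivAt α (Real.exp (-2 * t) * (1 + t * z) - α t) t)
    (h0 : α 0 = 1) :
    (∀ t, α t = Real.exp (-2 * t) *
        (2 * Real.exp t - 1 + z * (Real.exp t - t - 1))) ∧
    3 * (1 - Real.exp (-2) * (2 * Real.exp 1 - 1 + z * (Real.exp 1 - 2))) ≥
      (2 * Real.exp 1 ^ 4 - 8 * Real.exp 1 ^ 2 + 21 * Real.exp 1 - 27) /
        (2 * Real.exp 1 ^ 4) := by
  obtain ⟨hz0, hz1⟩ := hz
  constructor
  · -- uniqueness part
    set F : ℝ → ℝ := fun t => Real.exp t * α t -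
      (2 - Real.exp (-t) + z * (1 - (t + 1) * Real.exp (-t))) with hFdef
    have hF : ∀ t, HasDerivAt F 0 t := by
      intro t
      have h1 : HasDerivAt (fun t => Real.exp t * α t)
          (Real.exp t * α t + Real.exp t * (Real.exp (-2 * t) * (1 + t * z) - α t)) t :=
        (Real.hasDerivAt_exp t).mul (hα t)
      have hneg : HasDerivAt (fun t : ℝ => Real.exp (-t)) (Real.exp (-t) * (-1)) t :=
        (hasDerivAt_neg t).exp
      have h2 := (((hasDerivAt_const t (2:ℝ)).sub hneg).add
          ((hasDerivAt_const t z).mul ((hasDerivAt_const t (1:ℝ)).sub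
            (((hasDerivAt_id t).add_const 1).mul hneg))))
      have h3 := h1.sub h2
      convert h3 using 1
      case e'_4 | e'_5 | e'_8 => rfl
      simp only [id]
      have e1 : Real.exp (-t) = (Real.exp t)⁻¹ := Real.exp_neg t
      have e2 : Real.exp (-2 * t) = (Real.exp t)⁻¹ ^ 2 := by
        rw [show (-2 : ℝ) * t = -t + -t by ring, Real.exp_add, e1]; ring
      have hE : Real.exp t ≠ 0 := (Real.exp_pos t).ne'
      rw [e1, e2]
      field_simp
      ring
    have hFconst : ∀ t, F t = F 0 := by
      intro t
      have hdiff : Differentiable ℝ F := fun x => (hF x).differentiableAt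
      have hderiv : ∀ x, deriv F x = 0 := fun x => (hF x).deriv
      exact is_const_of_deriv_eq_zero hdiff hderiv t 0
    intro t
    have h := hFconst t
    have hF0 : F 0 = 0 := by
      simp [hFdef, h0, Real.exp_zero]
      norm_num
    rw [hF0] at h
    have hE : Real.exp t ≠ 0 := (Real.exp_pos t).ne'
    have e1 : Real.exp (-t) = (Real.exp t)⁻¹ := Real.exp_neg t
    have e2 : Real.exp (-2 * t) = (Real.exp t)⁻¹ ^ 2 := by
      rw [show (-2 : ℝ) * t = -t + -t by ring, Real.exp_add, e1]; ring
    have h' : Real.exp t * α t = 2 - Real.exp (-t) + z * (1 - (t + 1) * Real.exp (-t)) := by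
      have := sub_eq_zero.mp h
      linarith [this]
    rw [e2]
    rw [e1] at h'
    field_simp at h' ⊢
    nlinarith [h', sq_nonneg (Real.exp t)]
  · -- inequality part
    have he1 : (2.7182818283 : ℝ) < Real.exp 1 := Real.exp_one_gt_d9
    have he2 : Real.exp 1 < 2.7182818286 := Real.exp_one_lt_d9
    have hE2 : Real.exp (-2 : ℝ) = (Real.exp 1)⁻¹ ^ 2 := by
      rw [show (-2 : ℝ) = -1 + -1 by ring, Real.exp_add, Real.exp_neg]; ring
    have hEpos : (0 : ℝ) < Real.exp 1 := Real.exp_pos 1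
    set e := Real.exp 1 with he
    have b2l : (7.389056 : ℝ) < e ^ 2 := by nlinarith
    have b2u : e ^ 2 < 7.389057 := by nlinarith
    have b3l : (20.0855 : ℝ) < e ^ 3 := by nlinarith
    have b3u : e ^ 3 < 20.0856 := by nlinarith
    have b4l : (54.598 : ℝ) < e ^ 4 := by nlinarith
    have b4u : e ^ 4 < 54.599 := by nlinarith
    rw [hE2, ge_iff_le, div_le_iff₀ (by positivity)]
    have hinv : e⁻¹ ^ 2 * e ^ 2 = 1 := by field_simp
    have hz' : 0 ≤ (1 - z) * (e ^ 2 * (e - 2)) := by nlinarith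
    have key : 3 * (1 - e⁻¹ ^ 2 * (2 * e - 1 + z * (e - 2))) * (2 * e ^ 4)
        = 6 * e ^ 4 - (e⁻¹ ^ 2 * e ^ 2) * (6 * e ^ 2 * (2 * e - 1 + z * (e - 2))) := by
      ring
    rw [key, hinv]
    nlinarith [hz']
end

section
/- With z* = 1 - e/3, the quantities (e^{-1}z* + 1 - 2e^{-1})/(1/3) and (e^{-1}(1 - z*) + 1 - 2e^{-1})/(2/3) are both equal to 2 - 3/e, and 2 - 3/e > 1 + (27/4)e^{-4} - 12e^{-3} + 2e^{-2}. -/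
open Real

theorem stmt_17 :
    let e : ℝ := Real.exp 1
    let z : ℝ := 1 - e / 3
    (Real.exp (-1) * z + 1 - 2 * Real.exp (-1)) / (1/3) = 2 - 3 / e ∧
    (Real.exp (-1) * (1 - z) + 1 - 2 * Real.exp (-1)) / (2/3) = 2 - 3 / e ∧
    2 - 3 / e > 1 + (27/4) * Real.exp (-4) - 12 * Real.exp (-3) + 2 * Real.exp (-2) := by
  intro e z
  have he : e > 0 := Real.exp_pos 1
  have hne : e ≠ 0 := ne_of_gt he
  have h1 : Real.exp (-1) = e⁻¹ := Real.exp_neg 1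
  have h2 : Real.exp (-2) = e⁻¹ * e⁻¹ := by
    rw [show (-2:ℝ) = (-1) + (-1) by ring, Real.exp_add, h1]
  have h3 : Real.exp (-3) = e⁻¹ * e⁻¹ * e⁻¹ := by
    rw [show (-3:ℝ) = (-2) + (-1) by ring, Real.exp_add, h2, h1]
  have h4 : Real.exp (-4) = e⁻¹ * e⁻¹ * e⁻¹ * e⁻¹ := by
    rw [show (-4:ℝ) = (-3) + (-1) by ring, Real.exp_add, h3, h1]
  have hlo : (2.7 : ℝ) < e := by
    have := Real.exp_one_gt_d9; simp only [e]; linarith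
  have hhi : e < 2.72 := by
    have := Real.exp_one_lt_d9; simp only [e]; linarith
  refine ⟨?_, ?_, ?_⟩
  · rw [h1]; field_simp [z]; ring
  · rw [h1]; field_simp [z]; ring
  · rw [h2, h3, h4]
    have key : e^4 - 3*e^3 - 2*e^2 + 12*e - 27/4 > 0 := by nlinarith [sq_nonneg (e - 2.7), sq_nonneg ((e-2.7)*(e-2.7))]
    have he4 : (0:ℝ) < e^4 := by positivity
    rw [gt_iff_lt, ← sub_pos]
    have hrw : (2 - 3/e) - (1 + 27/4 * (e⁻¹ * e⁻¹ * e⁻¹ * e⁻¹) - 12 * (e⁻¹ * e⁻¹ * e⁻¹) + 2 * (e⁻¹ * e⁻¹)) = (e^4 - 3*e^3 - 2*e^2 + 12*e - 27/4) / e^4 := by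
      field_simp
      ring
    rw [hrw]
    exact div_pos key he4
end

section
/- The stationary probability vector π = (1/e², 4/(3e²), 1/(3e²), 4/(9e²), 2/(9e²), 1/(36e²), 1 - 121/(36e²)) is nonnegative and its entries sum to 1, and (1 - 121/(36e²))/(2/3) > 1 + (27/4)e^{-4} - 12e^{-3} + 2e^{-2}. -/
open Real

theorem stmt_18 :
    let e : ℝ := Real.exp 1
    let p : Fin 7 → ℝ := ![1 / e ^ 2, 4 / (3 * e ^ 2), 1 / (3 * e ^ 2),
      4 / (9 * e ^ 2), 2 / (9 * e ^ 2), 1 / (36 * e ^ 2), 1 - 121 / (36 * e ^ 2)]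
    (∀ i, 0 ≤ p i) ∧ (∑ i, p i) = 1 ∧
    (1 - 121 / (36 * e ^ 2)) / (2/3) >
      1 + (27/4) * Real.exp (-4) - 12 * Real.exp (-3) + 2 * Real.exp (-2) := by
  intro e p
  have hlo : (2.7182818283 : ℝ) < Real.exp 1 := Real.exp_one_gt_d9
  have hhi : Real.exp 1 < (2.7182818286 : ℝ) := Real.exp_one_lt_d9
  have hpos : (0:ℝ) < e := Real.exp_pos 1
  have h2 : (0:ℝ) < e ^ 2 := by positivity
  have hlast : (121:ℝ) / (36 * e ^ 2) ≤ 1 := by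
    rw [div_le_one (by positivity)]
    nlinarith [hlo, hpos]
  have hsum : (∑ i, p i) =
      1 / e ^ 2 + 4 / (3 * e ^ 2) + 1 / (3 * e ^ 2) + 4 / (9 * e ^ 2) + 2 / (9 * e ^ 2)
        + 1 / (36 * e ^ 2) + (1 - 121 / (36 * e ^ 2)) := by
    simp [p, Fin.sum_univ_succ]
    ring
  refine ⟨?_, ?_, ?_⟩
  · intro i
    fin_cases i
    · show (0:ℝ) ≤ 1 / e ^ 2; positivity
    · show (0:ℝ) ≤ 4 / (3 * e ^ 2); positivity
    · show (0:ℝ) ≤ 1 / (3 * e ^ 2); positivity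
    · show (0:ℝ) ≤ 4 / (9 * e ^ 2); positivity
    · show (0:ℝ) ≤ 2 / (9 * e ^ 2); positivity
    · show (0:ℝ) ≤ 1 / (36 * e ^ 2); positivity
    · show (0:ℝ) ≤ 1 - 121 / (36 * e ^ 2); linarith [hlast]
  · rw [hsum]; field_simp; ring
  · have hep : ∀ n : ℕ, Real.exp (-(n:ℝ)) = 1 / e ^ n := by
      intro n
      rw [Real.exp_neg, ← Real.exp_one_pow]
      simp [e]
    have h3 : Real.exp (-3) = 1 / e ^ 3 := by
      have := hep 3; norm_num at this ⊢; exact this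
    have h4 : Real.exp (-4) = 1 / e ^ 4 := by
      have := hep 4; norm_num at this ⊢; exact this
    have h2' : Real.exp (-2) = 1 / e ^ 2 := by
      have := hep 2; norm_num at this ⊢; exact this
    rw [h3, h4, h2', gt_iff_lt, ← sub_pos]
    have hcube : (0:ℝ) < e ^ 3 := by positivity
    have hquad : (0:ℝ) < e ^ 4 := by positivity
    have key : (0:ℝ) < (1/2) * e^4 - (169/24) * e^2 + 12 * e - 27/4 := by
      nlinarith [hlo, hhi, hpos, sq_nonneg (e - 2.71828), sq_nonneg (e^2 - 7.389)]
    have expand : (1 - 121 / (36 * e ^ 2)) / (2/3)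
        - (1 + 27/4 * (1 / e ^ 4) - 12 * (1 / e ^ 3) + 2 * (1 / e ^ 2))
        = ((1/2) * e^4 - (169/24) * e^2 + 12 * e - 27/4) / e^4 := by
      field_simp
      ring
    rw [expand]
    positivity
end

section
/- For fixed δ ∈ [0,1], letting ε = (1-δ)/N, the sum e^{-1} + Σ_{ℓ=1}^{N} (e^{-1}/ℓ!) ∏_{ℓ'=1}^{ℓ} (1 - (ℓ'-1)ε - δ)/(1 - (ℓ'-1)ε) converges to e^{-δ} as N → ∞. -/
/-!
The ℓ-th summand is the Poisson weight `e⁻¹ / ℓ!` times a product of ℓ factors in `[0, 1]`,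
each tending to `1 - δ` as `N → ∞`. By Tannery's theorem (dominated convergence for series,
dominated by `e⁻¹ / ℓ!`) the sum tends to `∑ e⁻¹ (1 - δ)^ℓ / ℓ! = e^{-δ}`; the isolated
`e⁻¹` is the empty-product term `ℓ = 0`.
-/

open Real Filter Topology Finset
open scoped Nat

lemma tendsto_sum_range_of_dominated {G : Type*} [NormedAddCommGroup G] [CompleteSpace G]
    {f : ℕ → ℕ → G} {g : ℕ → G} {bound : ℕ → ℝ} (h_sum : Summable bound)
    (h_lim : ∀ k, Tendsto (f · k) atTop (𝓝 (g k)))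
    (h_bound : ∀ N k, k ≤ N → ‖f N k‖ ≤ bound k) :
    Tendsto (fun N => ∑ k ∈ range (N + 1), f N k) atTop (𝓝 (∑' k, g k)) := by
  let F : ℕ → ℕ → G := fun N k => if k ≤ N then f N k else 0
  have hF_lim (k : ℕ) : Tendsto (F · k) atTop (𝓝 (g k)) :=
    (h_lim k).congr' <| (eventually_ge_atTop k).mono fun N hN => (if_pos hN).symm
  have hF_bound (N k : ℕ) : ‖F N k‖ ≤ bound k := by
    by_cases hk : k ≤ N
    · simpa [F, hk] using h_bound N k hk
    · simpa [F, hk] using (norm_nonneg _).trans (h_bound k k le_rfl)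
  refine (tendsto_tsum_of_dominated_convergence h_sum hF_lim (.of_forall hF_bound)).congr
    fun N => ?_
  rw [tsum_eq_sum (s := range (N + 1)) fun k hk => if_neg (by simpa [Nat.lt_succ_iff] using hk)]
  exact sum_congr rfl fun k hk => if_pos (Nat.lt_succ_iff.mp (mem_range.mp hk))

lemma hasSum_exp_neg_one_div_factorial_mul_pow (x : ℝ) :
    HasSum (fun ℓ : ℕ => exp (-1) / ℓ ! * x ^ ℓ) (exp (x - 1)) := by
  have h := (NormedSpace.expSeries_div_hasSum_exp x).mul_left (exp (-1))
  rw [← exp_eq_exp_ℝ, ← exp_add, neg_add_eq_sub] at h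
  simpa only [div_mul_eq_mul_div, mul_div_assoc] using h

-- At `a = 1` (hence `δ = 0`) the quotient is the junk value `0 / 0 = 0`.
lemma one_sub_sub_div_one_sub_mem_Icc {a δ : ℝ} (hδ : 0 ≤ δ) (h : a + δ ≤ 1) :
    (1 - a - δ) / (1 - a) ∈ Set.Icc 0 1 :=
  ⟨div_nonneg (by linarith) (by linarith), div_le_one_of_le₀ (by linarith) (by linarith)⟩

noncomputable def survivalProduct (δ ε : ℝ) (ℓ : ℕ) : ℝ :=
  ∏ ℓ' ∈ Icc 1 ℓ, (1 - ((ℓ' : ℝ) - 1) * ε - δ) / (1 - ((ℓ' : ℝ) - 1) * ε)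

lemma survivalProduct_mem_Icc {δ : ℝ} (hδ : δ ∈ Set.Icc (0 : ℝ) 1) {N ℓ : ℕ} (hℓ : ℓ ≤ N) :
    survivalProduct δ ((1 - δ) / N) ℓ ∈ Set.Icc 0 1 := by
  have hfactor : ∀ ℓ' ∈ Icc 1 ℓ, (1 - ((ℓ' : ℝ) - 1) * ((1 - δ) / N) - δ) /
      (1 - ((ℓ' : ℝ) - 1) * ((1 - δ) / N)) ∈ Set.Icc 0 1 := by
    intro ℓ' hℓ'
    obtain ⟨-, h2⟩ := mem_Icc.mp hℓ'
    have h2' : (ℓ' : ℝ) ≤ N := by exact_mod_cast h2.trans hℓ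
    have hfrac : ((ℓ' : ℝ) - 1) / N ≤ 1 := div_le_one_of_le₀ (by linarith) (by positivity)
    refine one_sub_sub_div_one_sub_mem_Icc hδ.1 ?_
    calc ((ℓ' : ℝ) - 1) * ((1 - δ) / N) + δ = ((ℓ' - 1) / N) * (1 - δ) + δ := by ring
      _ ≤ 1 * (1 - δ) + δ := by gcongr; linarith [hδ.2]
      _ = 1 := by ring
  exact ⟨prod_nonneg fun ℓ' h => (hfactor ℓ' h).1,
    prod_le_one (fun ℓ' h => (hfactor ℓ' h).1) fun ℓ' h => (hfactor ℓ' h).2⟩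

lemma tendsto_survivalProduct (δ c : ℝ) (ℓ : ℕ) :
    Tendsto (fun N : ℕ => survivalProduct δ (c / N) ℓ) atTop (𝓝 ((1 - δ) ^ ℓ)) := by
  have hfactor (k : ℝ) : Tendsto (fun N : ℕ => (1 - k * (c / N) - δ) / (1 - k * (c / N)))
      atTop (𝓝 (1 - δ)) := by
    have hkε : Tendsto (fun N : ℕ => k * (c / N)) atTop (𝓝 0) := by
      simpa using (tendsto_const_div_atTop_nhds_zero_nat c).const_mul k
    rw [show 1 - δ = (1 - 0 - δ) / (1 - 0) by simp]
    exact ((tendsto_const_nhds.sub hkε).sub tendsto_const_nhds).div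
      (tendsto_const_nhds.sub hkε) (by norm_num)
  simpa [survivalProduct] using tendsto_finsetProd (Icc 1 ℓ) fun ℓ' _ => hfactor (ℓ' - 1)

theorem stmt_19 (δ : ℝ) (hδ : δ ∈ Set.Icc (0:ℝ) 1) :
    Tendsto (fun N : ℕ =>
      Real.exp (-1) + ∑ ℓ ∈ Finset.Icc 1 N,
        (Real.exp (-1) / (Nat.factorial ℓ : ℝ)) *
          ∏ ℓ' ∈ Finset.Icc 1 ℓ,
            (1 - ((ℓ' : ℝ) - 1) * ((1 - δ) / N) - δ) /
              (1 - ((ℓ' : ℝ) - 1) * ((1 - δ) / N)))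
      atTop (nhds (Real.exp (-δ))) := by
  have hlim := tendsto_sum_range_of_dominated
    ((summable_pow_div_factorial 1).mul_left (exp (-1)))
    (fun ℓ => (tendsto_survivalProduct δ (1 - δ) ℓ).const_mul (exp (-1) / ℓ !))
    fun N ℓ hℓ => by
      obtain ⟨h0, h1⟩ := survivalProduct_mem_Icc hδ hℓ
      rw [norm_of_nonneg (mul_nonneg (by positivity) h0), one_pow, ← div_eq_mul_one_div]
      exact mul_le_of_le_one_right (by positivity) h1
  rw [(hasSum_exp_neg_one_div_factorial_mul_pow (1 - δ)).tsum_eq, sub_sub_cancel_left] at hlim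
  refine hlim.congr fun N => ?_
  rw [range_eq_Ico, sum_eq_sum_Ico_succ_bot (by omega : 0 < N + 1), zero_add,
    Ico_add_one_right_eq_Icc]
  simp [survivalProduct]
end
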